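/- arXiv:2012.06350 — 2 statements merged into one kernel-verified Lean document; each statement's English description precedes it below -/
import Mathlib

section
/- Let n ≥ 1 and let f ∈ ℂ[x_1,…,x_n] be an irreducible polynomial with f(0) ≠ 0 such that ∇f(x) ≠ 0 for every x ∈ ℂ^n with f(x) = 0. Then there exists a nonzero polynomial g ∈ ℂ[u_1,…,u_n] such that for every u ∈ ℂ^n with g(u) ≠ 0, every solution (λ, x) ∈ ℂ^{n+1} of the Lagrange multiplier system ℒ_{f,u} = 0 satisfies λ ≠ 0 and x_i ≠ 0 for all 1 ≤ i ≤ n. -/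
/-!
A solution with `λ = 0` would be a singular point of `f = 0`, so `λ ≠ 0`. Fix `i`. Writing
`r f` for `f` restricted to `x_i = 0` (nonzero because `f(0) ≠ 0`), every solution with `x_i = 0`
has `u = U(v)` for explicit polynomials `U_j = x_j + x_i · (r ∂_j f)` (with `U_i = x_i · r ∂_i f`),
where `v` is `x` with its `i`-th coordinate replaced by `λ⁻¹`, and `r f (v) = 0`. The `n`
polynomials `U_j` are algebraically dependent modulo `r f`, which yields a nonzero `g_i` vanishing
at all such `u`; the product of the `g_i` works.
-/

open MvPolynomial

namespace MvPolynomial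

variable {R σ : Type*} [CommRing R]

theorem aeval_option_elim {S : Type*} [CommRing S] [Algebra R S] (y : S) (s : σ → S)
    (P : MvPolynomial (Option σ) R) :
    aeval (fun o => Option.elim o y s) P =
      ((optionEquivLeft R σ P).map (aeval s).toRingHom).eval y := by
  induction P using MvPolynomial.induction_on with
  | C r => simp [optionEquivLeft_C]
  | add p q hp hq => simp [hp, hq]
  | mul_X p o hp => cases o <;> simp [hp, optionEquivLeft_X_none, optionEquivLeft_X_some]

theorem not_algebraicIndependent_of_card_lt [IsDomain R] {ι : Type*} [Fintype σ] [Fintype ι]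
    (hcard : Fintype.card σ < Fintype.card ι) (x : ι → MvPolynomial σ R) :
    ¬ AlgebraicIndependent R x := by
  intro hind
  have := hind.lift_cardinalMk_le_trdeg
  simp [Cardinal.mk_fintype] at this
  omega

/- The `n + 1` elements `h, s₁, …, sₙ` satisfy a relation `P(h, s) = 0`, since the transcendence
degree is `n`; after dividing `P` by the largest power of `h`, its constant term in `h` is `q`. -/
theorem exists_ne_zero_dvd_aeval [IsDomain R] [Fintype σ] {h : MvPolynomial σ R} (hh : h ≠ 0)
    (s : σ → MvPolynomial σ R) : ∃ q : MvPolynomial σ R, q ≠ 0 ∧ h ∣ aeval s q := by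
  obtain ⟨P, hP, hP0⟩ : ∃ P, aeval (fun o => Option.elim o h s) P = 0 ∧ P ≠ 0 := by
    have := not_algebraicIndependent_of_card_lt (by simp) (fun o => Option.elim o h s)
    simpa only [AlgebraicIndependent, injective_iff_map_eq_zero, not_forall, exists_prop]
      using this
  rw [aeval_option_elim] at hP
  obtain ⟨Q, hPQ, hQ⟩ := Polynomial.exists_eq_pow_rootMultiplicity_mul_and_not_dvd _
    ((optionEquivLeft R σ).injective.ne_iff' (map_zero _) |>.mpr hP0) 0
  rw [map_zero, sub_zero, Polynomial.X_dvd_iff] at hQ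
  refine ⟨Q.coeff 0, hQ, ?_⟩
  have hQh : (Q.map (aeval s).toRingHom).eval h = 0 := by
    rw [hPQ, map_zero, sub_zero] at hP
    simpa [hh] using hP
  have := Polynomial.sub_dvd_eval_sub h 0 (Q.map (aeval s).toRingHom)
  rwa [hQh, sub_zero, zero_sub, dvd_neg, ← Polynomial.coeff_zero_eq_eval_zero,
    Polynomial.coeff_map] at this

theorem eval_aeval {τ : Type*} (v : σ → R) (U : τ → MvPolynomial σ R) (p : MvPolynomial τ R) :
    eval v (aeval U p) = eval (fun j => eval v (U j)) p :=
  comp_aeval_apply (f := U) (aeval v) p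

variable [DecidableEq σ]

theorem eval_update_X_zero (v : σ → R) (i : σ) :
    (fun j => eval v (Function.update X i 0 j)) = Function.update v i 0 := by
  funext j
  by_cases hj : j = i <;> simp [hj]

theorem eval_bind₁_update_X_zero (v : σ → R) (i : σ) (p : MvPolynomial σ R) :
    eval v (bind₁ (Function.update X i 0) p) = eval (Function.update v i 0) p := by
  rw [bind₁, eval_aeval, eval_update_X_zero]

end MvPolynomial

section Lagrange

variable {K σ : Type*} [Field K]

def IsLagrangeSolution (f : MvPolynomial σ K) (u : σ → K) (l : K) (x : σ → K) : Prop :=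
  eval x f = 0 ∧ ∀ i, eval x (pderiv i f) - l * (u i - x i) = 0

namespace IsLagrangeSolution

variable {f : MvPolynomial σ K} {u : σ → K} {l : K} {x : σ → K}

theorem multiplier_ne_zero (hsm : ∀ x : σ → K, eval x f = 0 → ∃ i, eval x (pderiv i f) ≠ 0)
    (hs : IsLagrangeSolution f u l x) : l ≠ 0 := by
  rintro rfl
  obtain ⟨i, hi⟩ := hsm x hs.1
  exact hi (by simpa using hs.2 i)

theorem eq_add_inv_mul (hs : IsLagrangeSolution f u l x) (hl : l ≠ 0) (i : σ) :
    u i = x i + l⁻¹ * eval x (pderiv i f) := by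
  rw [sub_eq_zero.mp (hs.2 i)]
  field_simp
  ring

end IsLagrangeSolution

theorem exists_ne_zero_eval_eq_zero_of_isLagrangeSolution [Fintype σ] [DecidableEq σ]
    {f : MvPolynomial σ K} (hf : eval 0 f ≠ 0) (i : σ) :
    ∃ g : MvPolynomial σ K, g ≠ 0 ∧ ∀ u l x, IsLagrangeSolution f u l x → l ≠ 0 → x i = 0 →
      eval u g = 0 := by
  set r : MvPolynomial σ K →ₐ[K] MvPolynomial σ K := bind₁ (Function.update X i 0)
  have hr : r f ≠ 0 := by
    intro h
    have := congrArg (eval 0) h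
    rw [map_zero, eval_bind₁_update_X_zero] at this
    exact hf (by simpa using this)
  set U : σ → MvPolynomial σ K := fun j => Function.update X i 0 j + X i * r (pderiv j f)
  obtain ⟨g, hg, c, hc⟩ := exists_ne_zero_dvd_aeval hr U
  refine ⟨g, hg, fun u l x hs hl hxi => ?_⟩
  set v := Function.update x i l⁻¹
  have hv : Function.update v i 0 = x := by simp [v, ← hxi]
  have hvi : v i = l⁻¹ := Function.update_self i l⁻¹ x
  have hU : (fun j => eval v (U j)) = u := by
    funext j
    simp only [U, map_add, map_mul, eval_X, r, eval_bind₁_update_X_zero, hv]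
    rw [hs.eq_add_inv_mul hl, congrFun (eval_update_X_zero v i) j, hv, hvi]
  rw [← hU, ← eval_aeval, hc, map_mul, eval_bind₁_update_X_zero, hv, hs.1, zero_mul]

end Lagrange

theorem stmt7_general (n : ℕ) (f : MvPolynomial (Fin n) ℂ)
    (h0 : eval (fun _ => (0 : ℂ)) f ≠ 0)
    (hsm : ∀ x : Fin n → ℂ, eval x f = 0 → ∃ i, eval x (pderiv i f) ≠ 0) :
    ∃ g : MvPolynomial (Fin n) ℂ, g ≠ 0 ∧
      ∀ u : Fin n → ℂ, eval u g ≠ 0 →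
        ∀ (l : ℂ) (x : Fin n → ℂ),
          (eval x f = 0 ∧ ∀ i, eval x (pderiv i f) - l * (u i - x i) = 0) →
          l ≠ 0 ∧ ∀ i, x i ≠ 0 := by
  choose g hg0 hg using exists_ne_zero_eval_eq_zero_of_isLagrangeSolution h0
  refine ⟨∏ i, g i, Finset.prod_ne_zero_iff.mpr fun i _ => hg0 i, fun u hu l x hs => ?_⟩
  have hl : l ≠ 0 := IsLagrangeSolution.multiplier_ne_zero hsm hs
  refine ⟨hl, fun i hxi => hu ?_⟩
  rw [map_prod]
  exact Finset.prod_eq_zero (Finset.mem_univ i) (hg i u l x hs hl hxi)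

theorem stmt7 (n : ℕ) (hn : 1 ≤ n) (f : MvPolynomial (Fin n) ℂ) (hirr : Irreducible f)
    (h0 : eval (fun _ => (0 : ℂ)) f ≠ 0)
    (hsm : ∀ x : Fin n → ℂ, eval x f = 0 → ∃ i, eval x (pderiv i f) ≠ 0) :
    ∃ g : MvPolynomial (Fin n) ℂ, g ≠ 0 ∧
      ∀ u : Fin n → ℂ, eval u g ≠ 0 →
        ∀ (l : ℂ) (x : Fin n → ℂ),
          (eval x f = 0 ∧ ∀ i, eval x (pderiv i f) - l * (u i - x i) = 0) →
          l ≠ 0 ∧ ∀ i, x i ≠ 0 :=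
  stmt7_general n f h0 hsm
end

section
/- Let X ⊆ ℝ^n be nonempty and closed, let u ∈ ℝ^n, and let r_1, …, r_k be connected compact subsets of ℝ^n such that every point x* ∈ X minimizing the Euclidean distance ‖u − x‖ over x ∈ X belongs to r_1 ∪ ⋯ ∪ r_k. For each j set d_j := {‖u − s‖ : s ∈ r_j} ⊆ ℝ. Suppose there is an index i such that r_i ∩ X ≠ ∅ and for every j ≠ i one has d_i ∩ d_j = ∅ and min d_i < min d_j. Then the minimum of ‖u − x‖ over x ∈ X is attained, its value lies in d_i, and every minimizer lies in r_i. -/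
theorem stmt12 (n k : ℕ) (X : Set (EuclideanSpace ℝ (Fin n))) (hXne : X.Nonempty)
    (hXcl : IsClosed X) (u : EuclideanSpace ℝ (Fin n))
    (r : Fin k → Set (EuclideanSpace ℝ (Fin n)))
    (hconn : ∀ j, IsConnected (r j)) (hcomp : ∀ j, IsCompact (r j))
    (hcover : ∀ x ∈ X, (∀ y ∈ X, ‖u - x‖ ≤ ‖u - y‖) → ∃ j, x ∈ r j)
    (i : Fin k) (hiX : (r i ∩ X).Nonempty)
    (hsep : ∀ j, j ≠ i →
      ((fun s => ‖u - s‖) '' r i) ∩ ((fun s => ‖u - s‖) '' r j) = ∅ ∧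
      sInf ((fun s => ‖u - s‖) '' r i) < sInf ((fun s => ‖u - s‖) '' r j)) :
    (∃ x ∈ X, ∀ y ∈ X, ‖u - x‖ ≤ ‖u - y‖) ∧
    ∀ x ∈ X, (∀ y ∈ X, ‖u - x‖ ≤ ‖u - y‖) →
      ‖u - x‖ ∈ (fun s => ‖u - s‖) '' r i ∧ x ∈ r i := by
  have hcont : Continuous (fun s : EuclideanSpace ℝ (Fin n) => ‖u - s‖) :=
    (continuous_const.sub continuous_id).norm
  constructor
  · obtain ⟨y, hyX, hy⟩ := hXcl.exists_infDist_eq_dist hXne u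
    refine ⟨y, hyX, fun z hz => ?_⟩
    have h1 : dist u y ≤ dist u z := hy ▸ Metric.infDist_le_dist_of_mem hz
    simpa [dist_eq_norm] using h1
  · rintro x hxX hxmin
    obtain ⟨j, hxj⟩ := hcover x hxX hxmin
    by_cases hji : j = i
    · subst hji; exact ⟨⟨x, hxj, rfl⟩, hxj⟩
    · exfalso
      obtain ⟨hdisj, hlt⟩ := hsep j hji
      obtain ⟨a, haI, haX⟩ := hiX
      set f := fun s : EuclideanSpace ℝ (Fin n) => ‖u - s‖
      have hdi_comp : IsCompact (f '' r i) := (hcomp i).image hcont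
      have hdj_comp : IsCompact (f '' r j) := (hcomp j).image hcont
      have hdi_ne : (f '' r i).Nonempty := ⟨f a, a, haI, rfl⟩
      have hdj_ne : (f '' r j).Nonempty := ⟨f x, x, hxj, rfl⟩
      have hinfj_mem : sInf (f '' r j) ∈ f '' r j := hdj_comp.sInf_mem hdj_ne
      have hinfi_mem : sInf (f '' r i) ∈ f '' r i := hdi_comp.sInf_mem hdi_ne
      have hbdd : BddBelow (f '' r j) := hdj_comp.bddBelow
      have h1 : sInf (f '' r j) ≤ ‖u - x‖ := csInf_le hbdd ⟨x, hxj, rfl⟩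
      have h2 : ‖u - x‖ ≤ f a := hxmin a haX
      have hconn' : IsPreconnected (f '' r i) :=
        ((hconn i).image f hcont.continuousOn).isPreconnected
      have hmem : sInf (f '' r j) ∈ f '' r i := by
        apply hconn'.Icc_subset hinfi_mem ⟨a, haI, rfl⟩
        exact ⟨le_of_lt hlt, h1.trans h2⟩
      exact Set.eq_empty_iff_forall_notMem.mp hdisj _ ⟨hmem, hinfj_mem⟩
end
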